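/- arXiv:2203.02693 — 2 statements merged into one kernel-verified Lean document; each statement's English description precedes it below -/
import Mathlib

section
/- Let n ≥ 2 and N ≥ 3 be natural numbers and set g := ⌈n/(N−1)⌉. Let ε ≥ 0 be real and let J ⊆ {0,1,…,n} be a finite set with 0 ∈ J, n ∈ J and |J| ≤ N such that the associated point set S_J is an ε-approximation of the discrete Pareto front {(i, n−i) : i ∈ {0,…,n}}. Then ε·(n − g) ≥ g − 1. (Corollary 2: ε_opt(N) ≥ (mei_opt(N)−1)/(n − mei_opt(N)).) -/
/-!
Since `J` contains `0` and `n` and has at most `N` points, some two consecutive points `j < u` of `J`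
are at least `g = ⌈n/(N-1)⌉` apart. A point `j + k` of the gap is approximated either from the left,
forcing `k ≤ ε j`, or from the right, forcing `g - k ≤ ε (n - j - g)`. Taking `k` to be the least
integer above `ε j` and adding gives `g - 1 ≤ ε j + ε (n - j - g) = ε (n - g)`.
-/

open Finset

lemma exists_gap_of_card_pred_mul_lt {J : Finset ℕ} {n d : ℕ} (h0 : 0 ∈ J) (hn : n ∈ J)
    (hcard : (#J - 1) * d < n) : ∃ j ∈ J, j < n ∧ ∀ u ∈ J, u ≤ j ∨ j + d < u := by
  by_contra! hsmall
  -- Each `i < n` lies in `[j, j + d)` for `j` the largest element of `J` not above `i`.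
  have hcover : range n ⊆ (J.erase n).biUnion fun j => Ico j (j + d) := by
    intro i hi
    rw [mem_range] at hi
    have hne : (J.filter (· ≤ i)).Nonempty := ⟨0, by simp [h0]⟩
    obtain ⟨hjJ, hji⟩ := mem_filter.mp ((J.filter (· ≤ i)).max'_mem hne)
    set j := (J.filter (· ≤ i)).max' hne
    obtain ⟨u, huJ, hju, hud⟩ := hsmall j hjJ (by omega)
    have hiu : i < u := by
      by_contra! hui
      have := (J.filter (· ≤ i)).le_max' u (by simp [huJ, hui])
      omega
    simp only [mem_biUnion, mem_erase, mem_Ico]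
    exact ⟨j, ⟨by omega, hjJ⟩, hji, by omega⟩
  have : n ≤ (#J - 1) * d :=
    calc n = #(range n) := (card_range n).symm
      _ ≤ #((J.erase n).biUnion fun j => Ico j (j + d)) := card_le_card hcover
      _ ≤ ∑ j ∈ J.erase n, #(Ico j (j + d)) := card_biUnion_le
      _ = (#J - 1) * d := by simp [card_erase_of_mem hn]
  omega

lemma sub_one_le_add_of_forall_lt {g : ℕ} {x y : ℝ} (hx : 0 ≤ x) (hy : 0 ≤ y)
    (h : ∀ k : ℕ, k < g → (k : ℝ) ≤ x ∨ (g : ℝ) - k ≤ y) : (g : ℝ) - 1 ≤ x + y := by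
  by_cases hxg : (g : ℝ) - 1 ≤ x
  · linarith
  have hk : ⌊x⌋₊ + 1 < g := by
    have : ((⌊x⌋₊ + 1 : ℕ) : ℝ) < g := by push_cast; linarith [Nat.floor_le hx]
    exact_mod_cast this
  rcases h (⌊x⌋₊ + 1) hk with hle | hle
  · push_cast at hle
    linarith [Nat.lt_floor_add_one x]
  · push_cast at hle
    linarith [Nat.floor_le hx]

lemma le_or_sub_le_of_approx_across_gap {ε : ℝ} (hε : 0 ≤ ε) {n j g k u : ℕ}
    (hgap : u ≤ j ∨ j + g ≤ u) (hleft : (1 + ε) * (u : ℝ) ≥ ((j + k : ℕ) : ℝ))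
    (hright : (1 + ε) * ((n : ℝ) - u) ≥ (n : ℝ) - ((j + k : ℕ) : ℝ)) :
    (k : ℝ) ≤ ε * j ∨ (g : ℝ) - k ≤ ε * ((n : ℝ) - j - g) := by
  push_cast at hleft hright
  rcases hgap with hu | hu
  · have hu : (u : ℝ) ≤ j := by exact_mod_cast hu
    have := mul_le_mul_of_nonneg_left hu hε
    left; linarith
  · have hu : (j : ℝ) + g ≤ u := by exact_mod_cast hu
    have := mul_le_mul_of_nonneg_left (show (n : ℝ) - u ≤ n - j - g by linarith) hε
    right; linarith

lemma sub_one_le_mul_of_gap {ε : ℝ} (hε : 0 ≤ ε) {n g j : ℕ} {J : Finset ℕ}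
    (happrox : ∀ i : ℕ, i ≤ n →
      ∃ u ∈ J, (1 + ε) * (u : ℝ) ≥ (i : ℝ) ∧ (1 + ε) * ((n : ℝ) - (u : ℝ)) ≥ (n : ℝ) - (i : ℝ))
    (hgap : ∀ u ∈ J, u ≤ j ∨ j + g ≤ u) (hjg : j + g ≤ n) :
    (g : ℝ) - 1 ≤ ε * ((n : ℝ) - g) := by
  have hjg' : (j : ℝ) + g ≤ n := by exact_mod_cast hjg
  have key := sub_one_le_add_of_forall_lt (g := g) (mul_nonneg hε j.cast_nonneg)
    (mul_nonneg hε (show (0 : ℝ) ≤ n - j - g by linarith)) fun k hk => by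
      obtain ⟨u, huJ, hleft, hright⟩ := happrox (j + k) (by omega)
      exact le_or_sub_le_of_approx_across_gap hε (hgap u huJ) hleft hright
  linarith

theorem stmt5_general (n N : ℕ) (hn : 2 ≤ n) (hN : 3 ≤ N) (g : ℕ)
    (hg : (g : ℤ) = ⌈(n : ℚ) / ((N : ℚ) - 1)⌉)
    (ε : ℝ) (hε : 0 ≤ ε)
    (J : Finset ℕ) (h0 : 0 ∈ J) (hnJ : n ∈ J)
    (hcard : J.card ≤ N)
    (happrox : ∀ i : ℕ, i ≤ n →
      ∃ j ∈ J, (1 + ε) * (j : ℝ) ≥ (i : ℝ) ∧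
        (1 + ε) * ((n : ℝ) - (j : ℝ)) ≥ (n : ℝ) - (i : ℝ)) :
    ε * ((n : ℝ) - (g : ℝ)) ≥ (g : ℝ) - 1 := by
  have hN1 : (0 : ℚ) < N - 1 := by
    have : (3 : ℚ) ≤ N := by exact_mod_cast hN
    linarith
  have hg1 : 1 ≤ g := by
    have : (0 : ℤ) < g :=
      hg ▸ Int.ceil_pos.mpr (div_pos (by exact_mod_cast (by omega : 0 < n)) hN1)
    omega
  have hgN : (N - 1) * (g - 1) < n := by
    have hlt : (g : ℚ) - 1 < n / (N - 1) := by
      have := Int.ceil_lt_add_one ((n : ℚ) / (N - 1))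
      rw [← hg] at this
      push_cast at this
      linarith
    have := (lt_div_iff₀ hN1).mp hlt
    have : (((N - 1) * (g - 1) : ℕ) : ℚ) < n := by
      push_cast [Nat.cast_sub hg1, Nat.cast_sub (by omega : 1 ≤ N)]
      linarith
    exact_mod_cast this
  obtain ⟨j, -, hjn, hgap⟩ := exists_gap_of_card_pred_mul_lt h0 hnJ
    (lt_of_le_of_lt (Nat.mul_le_mul_right _ (by omega)) hgN)
  have hjg : j + g ≤ n := by have := hgap n hnJ; omega
  exact sub_one_le_mul_of_gap hε happrox (fun u hu => (hgap u hu).imp_right (by omega)) hjg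

/-- Corollary 2: for `n ≥ 2`, `N ≥ 3` and `g = ⌈n/(N-1)⌉`, if `J ⊆ {0,…,n}` contains
`0` and `n`, has at most `N` elements, and its point set `S_J = {(j, n-j) : j ∈ J}`
is an `ε`-approximation of the discrete Pareto front `{(i, n-i) : i ∈ {0,…,n}}`,
then `ε ≥ (g - 1)/(n - g)`, stated as `ε·(n - g) ≥ g - 1`. -/
theorem stmt5 (n N : ℕ) (hn : 2 ≤ n) (hN : 3 ≤ N) (g : ℕ)
    (hg : (g : ℤ) = ⌈(n : ℚ) / ((N : ℚ) - 1)⌉)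
    (ε : ℝ) (hε : 0 ≤ ε)
    (J : Finset ℕ) (hJ : ∀ j ∈ J, j ≤ n) (h0 : 0 ∈ J) (hnJ : n ∈ J)
    (hcard : J.card ≤ N)
    (happrox : ∀ i : ℕ, i ≤ n →
      ∃ j ∈ J, (1 + ε) * (j : ℝ) ≥ (i : ℝ) ∧
        (1 + ε) * ((n : ℝ) - (j : ℝ)) ≥ (n : ℝ) - (i : ℝ)) :
    ε * ((n : ℝ) - (g : ℝ)) ≥ (g : ℝ) - 1 :=
  stmt5_general n N hn hN g hg ε hε J h0 hnJ hcard happrox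
end

section
/- Let n ≥ 1 and N ≥ 2 be natural numbers, let r₁, r₂ ≤ 0 be real numbers, and set A := −r₁·n − r₂·n + r₁·r₂ + n²/2. Then: (i) for every finite set J ⊆ {0,1,…,n} with 0 ∈ J, n ∈ J and |J| ≤ N, one has HV(J, r) ≤ A − n/(2(N−1)); and (ii) there exists a finite set J ⊆ {0,1,…,n} with 0 ∈ J, n ∈ J and |J| ≤ N such that HV(J, r) ≥ A − (N−1)·⌈n/(N−1)⌉²/2. (Lemma 5: HV_opt(N, r) ∈ [A − (N−1)(mei_opt(N))²/2, A − n/(2(N−1))].) -/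
/-!
Inserting into `J` a point `a` above its current maximum `m` adds to the dominated region exactly
the rectangle `(m, a] × [r₂, n - a]`. Hence, if `d₁, …, dₖ` are the gaps between consecutive
points of `J` (they sum to `n`), then `HV(J, r) = A - ½ ∑ dᵢ²`. Integer gaps are at least `1`,
so `∑ dᵢ² ≥ ∑ dᵢ = n`. For `{0, g, 2g, …} ∪ {n}` all gaps are at most `g`, so
`∑ dᵢ² ≤ g n ≤ (N - 1) g²`.
-/

open MeasureTheory

/-- The hypervolume of the point set `{(j, n-j) : j ∈ J}` with respect to the
reference point `(r₁, r₂)`: the two-dimensional Lebesgue measure of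
`⋃_{j ∈ J} [r₁, j] × [r₂, n-j]`. -/
noncomputable def HV (n : ℕ) (J : Finset ℕ) (r₁ r₂ : ℝ) : ℝ :=
  (volume (⋃ j ∈ J, Set.Icc r₁ (j : ℝ) ×ˢ Set.Icc r₂ ((n : ℝ) - (j : ℝ)))).toReal

open Set

theorem Finset.induction_on_isGreatest {α : Type*} [LinearOrder α] [OrderBot α]
    {p : Finset α → α → Prop} (singleton : p {⊥} ⊥)
    (insert_max : ∀ a m (s : Finset α), ⊥ ∈ s → IsGreatest (s : Set α) m → m < a → p s m →
      p (insert a s) a)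
    {s : Finset α} {M : α} (hs : ⊥ ∈ s) (hM : IsGreatest (s : Set α) M) : p s M := by
  induction s using Finset.induction_on_max generalizing M with
  | empty => simp at hs
  | insert a s hlt ih =>
    have ha : IsGreatest (insert a s : Finset α) a := by
      refine ⟨Finset.mem_insert_self a s, fun x hx => ?_⟩
      rcases Finset.mem_insert.1 hx with rfl | hx
      exacts [le_rfl, (hlt x hx).le]
    obtain rfl := hM.unique ha
    by_cases hbot : ⊥ ∈ s
    · have hm := s.isGreatest_max' ⟨⊥, hbot⟩
      exact insert_max M _ s hbot hm (hlt _ hm.1) (ih hbot hm)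
    · obtain rfl : M = ⊥ := by simpa [hbot, eq_comm] using hs
      obtain rfl : s = ∅ := Finset.eq_empty_of_forall_notMem fun x hx => not_lt_bot (hlt x hx)
      exact singleton

theorem volume_real_Icc_prod_Icc (a b c d : ℝ) :
    volume.real (Icc a b ×ˢ Icc c d) = max (b - a) 0 * max (d - c) 0 := by
  rw [Measure.volume_eq_prod, measureReal_prod_prod, Real.volume_real_Icc, Real.volume_real_Icc]

theorem HV_singleton_zero (n : ℕ) {r₁ r₂ : ℝ} (hr₁ : r₁ ≤ 0) (hr₂ : r₂ ≤ 0) :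
    HV n {0} r₁ r₂ = -r₁ * (n - r₂) := by
  have : (0 : ℝ) ≤ n := n.cast_nonneg
  rw [HV, ← measureReal_def, Finset.set_biUnion_singleton, volume_real_Icc_prod_Icc,
    max_eq_left (by simpa using hr₁), max_eq_left (by simp; linarith)]
  simp

theorem HV_insert_of_isGreatest {n a m : ℕ} {s : Finset ℕ} {r₁ r₂ : ℝ} (hr₁ : r₁ ≤ 0)
    (hr₂ : r₂ ≤ 0) (hm : IsGreatest (s : Set ℕ) m) (hma : m < a) (han : a ≤ n) :
    HV n (insert a s) r₁ r₂ = HV n s r₁ r₂ + (a - m) * (n - a - r₂) := by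
  set box : ℕ → Set (ℝ × ℝ) := fun j => Icc r₁ (j : ℝ) ×ˢ Icc r₂ ((n : ℝ) - j)
  have hma' : (m : ℝ) < a := by exact_mod_cast hma
  have han' : (a : ℝ) ≤ n := by exact_mod_cast han
  have hm0 : (0 : ℝ) ≤ m := m.cast_nonneg
  -- every earlier box reaches at least as high as `box a`, and none further right than `m`
  have hinter : box a ∩ ⋃ j ∈ s, box j = Icc r₁ (m : ℝ) ×ˢ Icc r₂ ((n : ℝ) - a) := by
    ext ⟨x, y⟩
    simp only [box, mem_inter_iff, mem_iUnion, mem_prod, mem_Icc, exists_prop]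
    constructor
    · rintro ⟨⟨⟨hx₁, -⟩, hy₁, hy₂⟩, j, hj, ⟨-, hxj⟩, -⟩
      exact ⟨⟨hx₁, hxj.trans (by exact_mod_cast hm.2 hj)⟩, hy₁, hy₂⟩
    · rintro ⟨⟨hx₁, hxm⟩, hy₁, hy₂⟩
      exact ⟨⟨⟨hx₁, hxm.trans hma'.le⟩, hy₁, hy₂⟩, m, hm.1, ⟨hx₁, hxm⟩, hy₁, by linarith⟩
  have hfinite : volume (⋃ j ∈ s, box j) ≠ ⊤ :=
    (s.isCompact_biUnion fun j _ => isCompact_Icc.prod isCompact_Icc).measure_lt_top.ne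
  have hunion := measureReal_union_add_inter (μ := volume) (s := box a)
    (s.measurableSet_biUnion fun j _ => measurableSet_Icc.prod measurableSet_Icc)
    (isCompact_Icc.prod isCompact_Icc).measure_lt_top.ne hfinite
  rw [hinter, volume_real_Icc_prod_Icc, volume_real_Icc_prod_Icc] at hunion
  rw [HV, HV, ← measureReal_def, ← measureReal_def, Finset.set_biUnion_insert]
  rw [max_eq_left (by linarith), max_eq_left (by linarith), max_eq_left (by linarith)] at hunion
  linarith

theorem HV_le_of_isGreatest {n M : ℕ} {s : Finset ℕ} {r₁ r₂ : ℝ} (hr₁ : r₁ ≤ 0) (hr₂ : r₂ ≤ 0)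
    (hs : 0 ∈ s) (hM : IsGreatest (s : Set ℕ) M) (hMn : M ≤ n) :
    HV n s r₁ r₂ ≤ (M - r₁) * (n - r₂) - M ^ 2 / 2 - M / 2 := by
  refine Finset.induction_on_isGreatest (p := fun s M => M ≤ n →
    HV n s r₁ r₂ ≤ (M - r₁) * (n - r₂) - M ^ 2 / 2 - M / 2) ?_ ?_ hs hM hMn
  · intro _
    rw [Nat.bot_eq_zero, HV_singleton_zero n hr₁ hr₂]
    simp
  · intro a m s _ hm hma ih hMn
    have hgap : (m : ℝ) + 1 ≤ a := by exact_mod_cast hma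
    have := ih (hma.le.trans hMn)
    rw [HV_insert_of_isGreatest hr₁ hr₂ hm hma hMn]
    nlinarith

theorem le_HV_of_gaps_le {n M g : ℕ} {s : Finset ℕ} {r₁ r₂ : ℝ} (hr₁ : r₁ ≤ 0) (hr₂ : r₂ ≤ 0)
    (hs : 0 ∈ s) (hM : IsGreatest (s : Set ℕ) M) (hMn : M ≤ n)
    (hgap : ∀ j ∈ s, 0 < j → ∃ k ∈ s, k < j ∧ j ≤ k + g) :
    (M - r₁) * (n - r₂) - M ^ 2 / 2 - g * M / 2 ≤ HV n s r₁ r₂ := by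
  refine Finset.induction_on_isGreatest (p := fun s M => M ≤ n →
    (∀ j ∈ s, 0 < j → ∃ k ∈ s, k < j ∧ j ≤ k + g) →
    (M - r₁) * (n - r₂) - M ^ 2 / 2 - g * M / 2 ≤ HV n s r₁ r₂) ?_ ?_ hs hM hMn hgap
  · intro _ _
    rw [Nat.bot_eq_zero, HV_singleton_zero n hr₁ hr₂]
    simp
  · intro a m s hs hm hma ih hMn hgap
    have hlt : ∀ k ∈ insert a s, k < a → k ∈ s := fun k hk hka =>
      (Finset.mem_insert.1 hk).resolve_left hka.ne
    have hgap_s : ∀ j ∈ s, 0 < j → ∃ k ∈ s, k < j ∧ j ≤ k + g := by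
      intro j hj hj0
      obtain ⟨k, hk, hkj, hjk⟩ := hgap j (Finset.mem_insert_of_mem hj) hj0
      exact ⟨k, hlt k hk (hkj.trans ((hm.2 hj).trans_lt hma)), hkj, hjk⟩
    have ham : a ≤ m + g := by
      obtain ⟨k, hk, hka, hak⟩ := hgap a (Finset.mem_insert_self a s) (hma.trans_le' (hm.2 hs))
      exact hak.trans (Nat.add_le_add_right (hm.2 (hlt k hk hka)) g)
    have ham' : (a : ℝ) ≤ m + g := by exact_mod_cast ham
    have hma' : (m : ℝ) ≤ a := by exact_mod_cast hma.le
    have := ih (hma.le.trans hMn) hgap_s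
    rw [HV_insert_of_isGreatest hr₁ hr₂ hm hma hMn]
    nlinarith

theorem exists_finset_gaps_le {n N g : ℕ} (hN : 1 ≤ N) (hn : n ≤ (N - 1) * g) :
    ∃ J : Finset ℕ, 0 ∈ J ∧ IsGreatest (J : Set ℕ) n ∧ J.card ≤ N ∧
      ∀ j ∈ J, 0 < j → ∃ k ∈ J, k < j ∧ j ≤ k + g := by
  set J := (Finset.range N).image fun i => min (i * g) n
  have hmul : ∀ i < N, i * g ≤ n → i * g ∈ J := fun i hi hin =>
    Finset.mem_image.2 ⟨i, Finset.mem_range.2 hi, min_eq_left hin⟩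
  have hle : ∀ j ∈ J, j ≤ n := fun j hj => by
    obtain ⟨i, -, rfl⟩ := Finset.mem_image.1 hj
    exact min_le_right _ _
  refine ⟨J, by simpa using hmul 0 (by omega), ⟨?_, hle⟩, ?_, ?_⟩
  · exact Finset.mem_image.2 ⟨N - 1, Finset.mem_range.2 (by omega), min_eq_right hn⟩
  · exact Finset.card_image_le.trans (Finset.card_range N).le
  · intro j hj hj0
    have hjn := hle j hj
    have hg : 0 < g := Nat.pos_of_ne_zero fun hg => by simp [hg] at hn; omega
    -- the largest multiple of `g` below `j`
    set q := (j - 1) / g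
    have hqj : q * g ≤ j - 1 := Nat.div_mul_le_self (j - 1) g
    have hqN : q < N - 1 := Nat.lt_of_mul_lt_mul_right (a := g) (by omega)
    have hjq : j - 1 < q * g + g := Nat.lt_div_mul_add hg
    exact ⟨q * g, hmul q (by omega) (by omega), by omega, by omega⟩

theorem le_pred_mul_of_eq_ceil_div {n N g : ℕ} (hN : 1 < N)
    (hg : (g : ℤ) = ⌈(n : ℚ) / ((N : ℚ) - 1)⌉) : n ≤ (N - 1) * g := by
  have hN' : (0 : ℚ) < N - 1 := by norm_num; omega
  have h := Int.ceil_le.1 hg.ge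
  rw [div_le_iff₀ hN'] at h
  qify [hN.le]
  push_cast at h
  linarith

theorem stmt9_general (n N : ℕ) (hN : 2 ≤ N)
    (r₁ r₂ : ℝ) (hr₁ : r₁ ≤ 0) (hr₂ : r₂ ≤ 0)
    (A : ℝ) (hA : A = -r₁ * n - r₂ * n + r₁ * r₂ + (n : ℝ) ^ 2 / 2)
    (g : ℕ) (hg : (g : ℤ) = ⌈(n : ℚ) / ((N : ℚ) - 1)⌉) :
    (∀ J : Finset ℕ, (∀ j ∈ J, j ≤ n) → 0 ∈ J → n ∈ J → J.card ≤ N →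
      HV n J r₁ r₂ ≤ A - (n : ℝ) / (2 * ((N : ℝ) - 1))) ∧
    (∃ J : Finset ℕ, (∀ j ∈ J, j ≤ n) ∧ 0 ∈ J ∧ n ∈ J ∧ J.card ≤ N ∧
      HV n J r₁ r₂ ≥ A - ((N : ℝ) - 1) * (g : ℝ) ^ 2 / 2) := by
  have hA' : A = (n - r₁) * (n - r₂) - (n : ℝ) ^ 2 / 2 := by rw [hA]; ring
  have hng := le_pred_mul_of_eq_ceil_div (by omega) hg
  constructor
  · intro J hle h0 hnJ _
    have hHV := HV_le_of_isGreatest hr₁ hr₂ h0 ⟨hnJ, hle⟩ le_rfl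
    have hN' : (2 : ℝ) ≤ N := by exact_mod_cast hN
    calc HV n J r₁ r₂ ≤ A - n / 2 := by linarith
      _ ≤ A - n / (2 * (N - 1)) := by gcongr; linarith
  · obtain ⟨J, h0, hJ, hcard, hgap⟩ := exists_finset_gaps_le (by omega) hng
    refine ⟨J, hJ.2, h0, hJ.1, hcard, ?_⟩
    have hHV := le_HV_of_gaps_le hr₁ hr₂ h0 hJ le_rfl hgap
    have hng' : (n : ℝ) * g ≤ (N - 1) * g ^ 2 := by
      have h : ((n : ℕ) : ℝ) ≤ ((N - 1) * g : ℕ) := by exact_mod_cast hng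
      rw [Nat.cast_mul, Nat.cast_pred (by omega)] at h
      nlinarith [g.cast_nonneg (α := ℝ)]
    linarith

/-- Lemma 5: with `A = -r₁n - r₂n + r₁r₂ + n²/2` and `g = ⌈n/(N-1)⌉ = mei_opt(N)`,
(i) every `J ⊆ {0,…,n}` with `0, n ∈ J` and `|J| ≤ N` has `HV(J,r) ≤ A - n/(2(N-1))`,
and (ii) some such `J` has `HV(J,r) ≥ A - (N-1)·g²/2`. -/
theorem stmt9 (n N : ℕ) (hn : 1 ≤ n) (hN : 2 ≤ N)
    (r₁ r₂ : ℝ) (hr₁ : r₁ ≤ 0) (hr₂ : r₂ ≤ 0)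
    (A : ℝ) (hA : A = -r₁ * n - r₂ * n + r₁ * r₂ + (n : ℝ) ^ 2 / 2)
    (g : ℕ) (hg : (g : ℤ) = ⌈(n : ℚ) / ((N : ℚ) - 1)⌉) :
    (∀ J : Finset ℕ, (∀ j ∈ J, j ≤ n) → 0 ∈ J → n ∈ J → J.card ≤ N →
      HV n J r₁ r₂ ≤ A - (n : ℝ) / (2 * ((N : ℝ) - 1))) ∧
    (∃ J : Finset ℕ, (∀ j ∈ J, j ≤ n) ∧ 0 ∈ J ∧ n ∈ J ∧ J.card ≤ N ∧
      HV n J r₁ r₂ ≥ A - ((N : ℝ) - 1) * (g : ℝ) ^ 2 / 2) :=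
  stmt9_general n N hN r₁ r₂ hr₁ hr₂ A hA g hg
end
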